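/- arXiv:2403.04807 — 5 statements merged into one kernel-verified Lean document; each statement's English description precedes it below -/
import Mathlib

section
/- Shallow scalar ReLU networks are universal approximators of C([0,1]) in the supremum norm: for every continuous function f : [0,1] → ℝ and every ε > 0 there exist N ∈ ℕ and parameters a, b, c : Fin N → ℝ such that for all x ∈ [0,1], |f(x) − Σ_{i=1}^{N} c_i · max(a_i x + b_i, 0)| < ε. -/
/-!
By uniform continuity, `f` is uniformly within `ε` of its piecewise-linear interpolant on the
grid `k / m` once `1 / m` is small, since on each cell the interpolant is a convex combination
of two values of `f` taken at points close to `x`. That interpolant is `f 0` plus a telescoping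
sum of rescaled ramps `t ↦ max t 0 - max (t - 1) 0`, each a difference of two ReLU neurons, so it
lies in the linear span of the neurons; every element of that span is a shallow network.
-/

open Finset

def reluSpan : Submodule ℝ (ℝ → ℝ) :=
  Submodule.span ℝ (Set.range fun p : ℝ × ℝ => fun x => max (p.1 * x + p.2) 0)

theorem exists_fin_of_mem_reluSpan {g : ℝ → ℝ} (hg : g ∈ reluSpan) :
    ∃ (N : ℕ) (a b c : Fin N → ℝ), ∀ x, g x = ∑ i : Fin N, c i * max (a i * x + b i) 0 := by
  obtain ⟨N, c, φ, rfl⟩ := Submodule.mem_span_set'.mp hg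
  choose p hp using fun i => (φ i).2
  refine ⟨N, fun i => (p i).1, fun i => (p i).2, c, fun x => ?_⟩
  simp only [Finset.sum_apply, Pi.smul_apply, smul_eq_mul, ← hp]

theorem const_mem_reluSpan (c : ℝ) : (fun _ => c) ∈ reluSpan := by
  have h : (fun x : ℝ => max ((0 : ℝ) * x + 1) 0) ∈ reluSpan :=
    Submodule.subset_span ⟨(0, 1), rfl⟩
  convert reluSpan.smul_mem c h using 1
  ext x
  simp

def ramp (t : ℝ) : ℝ := max t 0 - max (t - 1) 0

theorem ramp_of_nonpos {t : ℝ} (ht : t ≤ 0) : ramp t = 0 := by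
  rw [ramp, max_eq_right ht, max_eq_right (by linarith), sub_zero]

theorem ramp_of_one_le {t : ℝ} (ht : 1 ≤ t) : ramp t = 1 := by
  rw [ramp, max_eq_left (by linarith), max_eq_left (by linarith)]
  ring

theorem ramp_of_mem_Icc {t : ℝ} (ht : t ∈ Set.Icc 0 1) : ramp t = t := by
  rw [ramp, max_eq_left ht.1, max_eq_right (by linarith [ht.2]), sub_zero]

theorem ramp_affine_mem_reluSpan (a b : ℝ) : (fun x => ramp (a * x + b)) ∈ reluSpan := by
  have h₁ : (fun x : ℝ => max (a * x + b) 0) ∈ reluSpan := Submodule.subset_span ⟨(a, b), rfl⟩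
  have h₂ : (fun x : ℝ => max (a * x + (b - 1)) 0) ∈ reluSpan :=
    Submodule.subset_span ⟨(a, b - 1), rfl⟩
  convert reluSpan.sub_mem h₁ h₂ using 1
  ext x
  simp only [ramp, Pi.sub_apply, add_sub_assoc]

theorem sum_range_sub_mul_ramp (u : ℕ → ℝ) {n j : ℕ} {t : ℝ} (hj : j < n) (hjt : j ≤ t)
    (htj : t ≤ j + 1) :
    ∑ k ∈ range n, (u (k + 1) - u k) * ramp (t - k) = u j - u 0 + (u (j + 1) - u j) * (t - j) := by
  have below : ∑ k ∈ range j, (u (k + 1) - u k) * ramp (t - k) = u j - u 0 := by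
    rw [← sum_range_sub]
    refine sum_congr rfl fun k hk => ?_
    have : (k : ℝ) + 1 ≤ j := by exact_mod_cast mem_range.mp hk
    rw [ramp_of_one_le (by linarith), mul_one]
  have above : ∑ k ∈ Ico (j + 1) n, (u (k + 1) - u k) * ramp (t - k) = 0 := by
    refine sum_eq_zero fun k hk => ?_
    have : (j : ℝ) + 1 ≤ k := by exact_mod_cast (mem_Ico.mp hk).1
    rw [ramp_of_nonpos (by linarith), mul_zero]
  rw [← sum_range_add_sum_Ico _ hj, sum_range_succ, below, above,
    ramp_of_mem_Icc ⟨by linarith, by linarith⟩, add_zero]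

theorem exists_nat_mem_Icc_of_mem_Icc {n : ℕ} (hn : 0 < n) {t : ℝ}
    (ht : t ∈ Set.Icc 0 (n : ℝ)) :
    ∃ j < n, (j : ℝ) ≤ t ∧ t ≤ j + 1 := by
  rcases ht.2.lt_or_eq with hlt | rfl
  · exact ⟨⌊t⌋₊, (Nat.floor_lt ht.1).mpr hlt, Nat.floor_le ht.1, (Nat.lt_floor_add_one t).le⟩
  · refine ⟨n - 1, Nat.sub_lt hn one_pos, ?_, ?_⟩ <;> rw [Nat.cast_pred hn] <;> linarith

noncomputable def reluInterpolant (f : ℝ → ℝ) (m : ℕ) (x : ℝ) : ℝ :=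
  f 0 + ∑ k ∈ range m, (f (↑(k + 1) / m) - f (k / m)) * ramp (m * x - k)

theorem reluInterpolant_mem_reluSpan (f : ℝ → ℝ) (m : ℕ) : reluInterpolant f m ∈ reluSpan := by
  have h := reluSpan.add_mem (const_mem_reluSpan (f 0)) <|
    reluSpan.sum_mem (t := range m) fun (k : ℕ) _ =>
      reluSpan.smul_mem (f (↑(k + 1) / m) - f (k / m)) (ramp_affine_mem_reluSpan m (-k))
  convert h using 1
  ext x
  simp [reluInterpolant, Finset.sum_apply, sub_eq_add_neg]

theorem abs_sub_add_mul_sub_lt {y a b s ε : ℝ} (ha : |y - a| < ε) (hb : |y - b| < ε)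
    (hs : s ∈ Set.Icc 0 1) : |y - (a + (b - a) * s)| < ε := by
  have := (convex_ball y ε).add_smul_sub_mem (x := a) (y := b) ?_ ?_ hs
  · simpa [Real.dist_eq, abs_sub_comm, mul_comm] using this
  all_goals simpa [Real.dist_eq, abs_sub_comm]

theorem abs_sub_reluInterpolant_lt {f : ℝ → ℝ} {δ ε : ℝ}
    (hf : ∀ x ∈ Set.Icc (0 : ℝ) 1, ∀ y ∈ Set.Icc (0 : ℝ) 1, dist x y < δ → dist (f x) (f y) < ε)
    {m : ℕ} (hm : 0 < m) (hmδ : 1 / (m : ℝ) < δ) {x : ℝ} (hx : x ∈ Set.Icc (0 : ℝ) 1) :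
    |f x - reluInterpolant f m x| < ε := by
  have hm' : (0 : ℝ) < m := by exact_mod_cast hm
  obtain ⟨j, hj, hjx, hxj⟩ := exists_nat_mem_Icc_of_mem_Icc hm
    ⟨mul_nonneg hm'.le hx.1, mul_le_of_le_one_right hm'.le hx.2⟩
  have close : ∀ i : ℕ, i ≤ m → (i : ℝ) ≤ m * x + 1 → m * x ≤ i + 1 → |f x - f (i / m)| < ε := by
    intro i him hi₁ hi₂
    have him' : (i : ℝ) ≤ m := by exact_mod_cast him
    rw [← Real.dist_eq]
    refine hf x hx _ ⟨by positivity, (div_le_one hm').mpr him'⟩ ?_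
    calc dist x (i / m) = |m * x - i| / m := by
          rw [Real.dist_eq, show x - i / m = (m * x - i) / m by field_simp, abs_div,
            abs_of_pos hm']
      _ ≤ 1 / m := by gcongr; exact abs_le.mpr ⟨by linarith, by linarith⟩
      _ < δ := hmδ
  have hval : reluInterpolant f m x = f (j / m) + (f (↑(j + 1) / m) - f (j / m)) * (m * x - j) := by
    rw [reluInterpolant, sum_range_sub_mul_ramp (fun k => f (k / m)) hj hjx hxj, Nat.cast_zero,
      zero_div]
    ring
  rw [hval]
  refine abs_sub_add_mul_sub_lt (close j hj.le (by linarith) hxj)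
    (close (j + 1) hj (by push_cast; linarith) (by push_cast; linarith)) ⟨by linarith, by linarith⟩

/-- Shallow scalar ReLU networks are universal approximators of `C([0,1])` in the
supremum norm. -/
theorem shallow_relu_universal
    (f : ℝ → ℝ) (hf : ContinuousOn f (Set.Icc (0 : ℝ) 1))
    (ε : ℝ) (hε : 0 < ε) :
    ∃ (N : ℕ) (a b c : Fin N → ℝ),
      ∀ x ∈ Set.Icc (0 : ℝ) 1,
        |f x - ∑ i : Fin N, c i * max (a i * x + b i) 0| < ε := by
  obtain ⟨δ, hδ, hfδ⟩ := Metric.uniformContinuousOn_iff.mp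
    (isCompact_Icc.uniformContinuousOn_of_continuous hf) ε hε
  obtain ⟨n, hn⟩ := exists_nat_one_div_lt hδ
  obtain ⟨N, a, b, c, hnet⟩ := exists_fin_of_mem_reluSpan (reluInterpolant_mem_reluSpan f (n + 1))
  refine ⟨N, a, b, c, fun x hx => ?_⟩
  rw [← hnet]
  exact abs_sub_reluInterpolant_lt hfδ n.succ_pos (by exact_mod_cast hn) hx
end

section
/- Let f : ℝ → ℝ be defined by f(x) = max(2x, 0) − max(4x − 2, 0) + max(2x − 2, 0). Then for every n ≥ 1 and every x ∈ [0,1], the n-fold composition satisfies f^{∘n}(x) = 2 · dist(2^{n−1} x, ℤ), where dist(y, ℤ) denotes the distance from y to the nearest integer. In particular, on [0,1] the n-fold composition is a sawtooth with 2^{n−1} teeth, so the number of affine pieces grows exponentially with the number of compositions. -/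
/-!
On `[0,1]` the network agrees with `y ↦ 2 * dist(y, ℤ)`. Since `dist(·, ℤ)` is even and
`1`-periodic, `dist(2 * dist(y, ℤ), ℤ) = dist(2 * y, ℤ)`, so each further application of the
network doubles the argument of `dist(·, ℤ)`; the induction starts from `x = 2 * dist(x / 2, ℤ)`.
-/

section round

variable {α : Type*} [Field α] [LinearOrder α] [IsStrictOrderedRing α] [FloorRing α]

theorem abs_sub_round_eq_of_abs_sub_le_half {x : α} {z : ℤ} (h : |x - z| ≤ 1 / 2) :
    |x - round x| = |x - z| := by
  refine le_antisymm (round_le x z) ?_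
  by_cases hz : round x = z
  · rw [hz]
  have h_one : (1 : α) ≤ |(round x : α) - z| := by
    exact_mod_cast Int.one_le_abs (sub_ne_zero.mpr hz)
  have h_tri : |(round x : α) - z| ≤ |x - round x| + |x - z| := by
    simpa [abs_sub_comm x (round x : α)] using abs_sub_le (round x : α) x z
  linarith

theorem abs_sub_round_add_intCast (x : α) (z : ℤ) :
    |x + z - round (x + z)| = |x - round x| := by
  rw [round_add_intCast]; push_cast; ring_nf

theorem abs_sub_round_neg (x : α) : |-x - round (-x)| = |x - round x| := by
  refine le_antisymm ?_ ?_
  · calc _ ≤ |-x - ((-round x : ℤ) : α)| := round_le _ _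
      _ = _ := by rw [Int.cast_neg, ← abs_neg]; ring_nf
  · calc _ ≤ |x - ((-round (-x) : ℤ) : α)| := round_le _ _
      _ = _ := by rw [Int.cast_neg, ← abs_neg]; ring_nf

theorem abs_sub_round_two_mul_abs_sub_round (x : α) :
    |2 * |x - round x| - round (2 * |x - round x|)| = |2 * x - round (2 * x)| := by
  have hx : 2 * x = 2 * (x - round x) + ((2 * round x : ℤ) : α) := by push_cast; ring
  rw [hx, abs_sub_round_add_intCast]
  rcases le_total 0 (x - round x) with h | h
  · rw [abs_of_nonneg h]
  · rw [abs_of_nonpos h, mul_neg, abs_sub_round_neg]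

end round

def reluTent (x : ℝ) : ℝ := max (2 * x) 0 - max (4 * x - 2) 0 + max (2 * x - 2) 0

theorem reluTent_eq_of_mem_Icc {x : ℝ} (hx : x ∈ Set.Icc (0 : ℝ) 1) :
    reluTent x = 2 * |x - round x| := by
  obtain ⟨h0, h1⟩ := hx
  rw [reluTent, max_eq_left (by linarith), max_eq_right (by linarith : 2 * x - 2 ≤ 0)]
  rcases le_total x (1 / 2) with h | h
  · have hd : |x - ((0 : ℤ) : ℝ)| = x := by simp [abs_of_nonneg h0]
    rw [abs_sub_round_eq_of_abs_sub_le_half (hd.trans_le h), hd, max_eq_right (by linarith)]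
    ring
  · have hd : |x - ((1 : ℤ) : ℝ)| = 1 - x := by
      rw [Int.cast_one, abs_of_nonpos (by linarith), neg_sub]
    rw [abs_sub_round_eq_of_abs_sub_le_half (hd.trans_le (by linarith)), hd,
      max_eq_left (by linarith)]
    ring

theorem reluTent_two_mul_abs_sub_round (x : ℝ) :
    reluTent (2 * |x - round x|) = 2 * |2 * x - round (2 * x)| := by
  have h := abs_sub_round x
  rw [reluTent_eq_of_mem_Icc ⟨by positivity, by linarith⟩, abs_sub_round_two_mul_abs_sub_round]

theorem reluTent_iterate {x : ℝ} (hx : x ∈ Set.Icc (0 : ℝ) 1) (n : ℕ) :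
    reluTent^[n] x = 2 * |2 ^ n * (x / 2) - round (2 ^ n * (x / 2))| := by
  induction n with
  | zero =>
    have hd : |x / 2 - ((0 : ℤ) : ℝ)| = x / 2 := by
      rw [Int.cast_zero, sub_zero, abs_of_nonneg (by linarith [hx.1])]
    rw [Function.iterate_zero_apply, pow_zero, one_mul,
      abs_sub_round_eq_of_abs_sub_le_half (hd.trans_le (by linarith [hx.2])), hd]
    ring
  | succ n ih =>
    rw [Function.iterate_succ_apply', ih, reluTent_two_mul_abs_sub_round, pow_succ', mul_assoc]

/-- The shallow ReLU network `f(x) = ReLU(2x) - ReLU(4x-2) + ReLU(2x-2)` (the tent map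
on `[0,1]`) composed `n` times with itself equals a sawtooth with `2^(n-1)` teeth on
`[0,1]`: `f^[n] x = 2 * dist(2^(n-1) * x, ℤ)`, the distance to the nearest integer being
`|y - round y|`. -/
theorem sawtooth_iterate
    (f : ℝ → ℝ)
    (hf : ∀ x : ℝ, f x = max (2 * x) 0 - max (4 * x - 2) 0 + max (2 * x - 2) 0)
    (n : ℕ) (hn : 1 ≤ n) :
    ∀ x ∈ Set.Icc (0 : ℝ) 1,
      f^[n] x = 2 * |2 ^ (n - 1) * x - round (2 ^ (n - 1) * x)| := by
  obtain rfl : f = reluTent := funext hf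
  obtain ⟨m, rfl⟩ := Nat.exists_eq_add_of_le' hn
  intro x hx
  rw [reluTent_iterate hx, Nat.add_sub_cancel, pow_succ, mul_assoc, mul_div_cancel₀ _ two_ne_zero]
end

section
/- Let G be a group acting on measurable spaces M and N with each map p ↦ g • p measurable, let μ be a measure on M, and let χ : G → ℝ with χ(g) > 0 for all g be such that the integral on M is χ-covariant: for every g ∈ G and every μ-integrable f : M → ℝ, ∫_M f(g⁻¹ • p) dμ(p) = χ(g) · ∫_M f(p) dμ(p). Suppose the action of G on N is transitive. Let k : M × N → ℝ satisfy the symmetry χ(g) · k(g • p, g • q) = k(p, q) for all g, p, q, with p ↦ k(p,q) measurable for each q, and suppose ∫_M |k(p, q₀)| dμ(p) < ∞ for some q₀ ∈ N. Then the L¹-norm of the kernel slice is independent of the output point: ∫_M |k(p, q₁)| dμ(p) = ∫_M |k(p, q₂)| dμ(p) for all q₁, q₂ ∈ N. -/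
open MeasureTheory

/-- For a kernel satisfying the equivariance symmetry `χ g * k (g • p) (g • q) = k p q`
over a transitive action on the output space `N`, the `L¹`-norm of the kernel slice
`p ↦ k p q` is independent of the output point `q`. -/
theorem kernel_slice_L1_norm_independent
    {G M N : Type*} [Group G] [MulAction G M] [MulAction G N]
    [MeasurableSpace M] (μ : Measure M)
    (hactmeas : ∀ g : G, Measurable fun p : M => g • p)
    (χ : G → ℝ) (hχpos : ∀ g, 0 < χ g)
    (hcov : ∀ (g : G) (f : M → ℝ), Integrable f μ →
      ∫ p, f (g⁻¹ • p) ∂μ = χ g * ∫ p, f p ∂μ)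
    (htrans : ∀ q₁ q₂ : N, ∃ g : G, g • q₁ = q₂)
    (k : M → N → ℝ)
    (hkmeas : ∀ q : N, Measurable fun p => k p q)
    (hsym : ∀ (g : G) (p : M) (q : N), χ g * k (g • p) (g • q) = k p q)
    (q₀ : N) (hq₀int : Integrable (fun p => k p q₀) μ) :
    ∀ q₁ q₂ : N, ∫ p, |k p q₁| ∂μ = ∫ p, |k p q₂| ∂μ := by
  set I : ℝ := ∫ p, |k p q₀| ∂μ with hI
  have habs : Integrable (fun p => |k p q₀|) μ := hq₀int.abs
  have key : ∀ q : N, ∫ p, |k p q| ∂μ = I := by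
    intro q
    obtain ⟨g, hg⟩ := htrans q₀ q
    have hginvq : g⁻¹ • q = q₀ := by rw [← hg, inv_smul_smul]
    -- pointwise identity: |k p q| = χ g⁻¹ * |k (g⁻¹ • p) q₀|
    have hpt : ∀ p : M, |k p q| = χ g⁻¹ * |k (g⁻¹ • p) q₀| := by
      intro p
      have := hsym g⁻¹ p q
      rw [hginvq] at this
      rw [← this, abs_mul, abs_of_pos (hχpos g⁻¹)]
    have h1 : ∫ p, |k (g⁻¹ • p) q₀| ∂μ = χ g * I := hcov g _ habs
    have hJ : ∫ p, |k p q| ∂μ = χ g⁻¹ * (χ g * I) := by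
      calc ∫ p, |k p q| ∂μ = ∫ p, χ g⁻¹ * |k (g⁻¹ • p) q₀| ∂μ := by
            simp only [hpt]
        _ = χ g⁻¹ * ∫ p, |k (g⁻¹ • p) q₀| ∂μ := integral_const_mul _ _
        _ = χ g⁻¹ * (χ g * I) := by rw [h1]
    by_cases hI0 : I = 0
    · rw [hJ, hI0]; ring
    · -- the shifted function is integrable since its integral is nonzero
      have hint1 : Integrable (fun p => |k (g⁻¹ • p) q₀|) μ := by
        by_contra hni
        rw [integral_undef hni] at h1
        exact hI0 (by
          have := h1.symm
          rcases mul_eq_zero.mp this with h | h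
          · exact absurd h (ne_of_gt (hχpos g))
          · exact h)
      have hintq : Integrable (fun p => |k p q|) μ := by
        have : (fun p => |k p q|) = fun p => χ g⁻¹ * |k (g⁻¹ • p) q₀| := funext hpt
        rw [this]
        exact hint1.const_mul _
      -- apply covariance with g⁻¹ to the slice at q
      have h2 : ∫ p, |k (g • p) q| ∂μ = χ g⁻¹ * ∫ p, |k p q| ∂μ := by
        have := hcov g⁻¹ (fun p => |k p q|) hintq
        simpa using this
      -- pointwise: |k (g • p) q| = (χ g)⁻¹ * |k p q₀|
      have hpt2 : ∀ p : M, |k (g • p) q| = (χ g)⁻¹ * |k p q₀| := by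
        intro p
        have := hsym g p q₀
        rw [hg] at this
        have h3 : k (g • p) q = (χ g)⁻¹ * k p q₀ := by
          field_simp [ne_of_gt (hχpos g)]
          linarith [this]
        rw [h3, abs_mul, abs_of_pos (inv_pos.mpr (hχpos g))]
      have h4 : (χ g)⁻¹ * I = χ g⁻¹ * (χ g⁻¹ * (χ g * I)) := by
        calc (χ g)⁻¹ * I = ∫ p, (χ g)⁻¹ * |k p q₀| ∂μ := (integral_const_mul _ _).symm
          _ = ∫ p, |k (g • p) q| ∂μ := by simp only [hpt2]
          _ = χ g⁻¹ * ∫ p, |k p q| ∂μ := h2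
          _ = χ g⁻¹ * (χ g⁻¹ * (χ g * I)) := by rw [hJ]
      -- deduce χ g⁻¹ * χ g = 1
      have hab : χ g⁻¹ * χ g = 1 := by
        have ha := hχpos g
        have hb := hχpos g⁻¹
        have hsq : (χ g⁻¹ * χ g) ^ 2 = 1 := by
          have h5 : I = χ g * (χ g⁻¹ * (χ g⁻¹ * (χ g * I))) := by
            rw [← h4]; field_simp
          have h6 : I * ((χ g⁻¹ * χ g) ^ 2 - 1) = 0 := by linear_combination -h5
          rcases mul_eq_zero.mp h6 with h | h
          · exact absurd h hI0
          · linarith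
        have hpos : 0 < χ g⁻¹ * χ g := mul_pos hb ha
        nlinarith [hsq, hpos]
      rw [hJ, ← mul_assoc, hab, one_mul]
  intro q₁ q₂
  rw [key q₁, key q₂]
end

section
/- Let G be a group acting on measurable spaces M and N with each map p ↦ g • p measurable, let μ be a measure on M, and let χ : G → ℝ_{>0} be a homomorphism into the positive reals such that the integral on M is χ-covariant: for every g ∈ G and every μ-integrable f : M → ℝ, ∫_M f(g⁻¹ • p) dμ(p) = χ(g) · ∫_M f(p) dμ(p). Suppose the action of G on N is transitive, fix q₀ ∈ N, and let κ : M → ℝ be μ-integrable and compatible: κ(h⁻¹ • p) = χ(h) · κ(p) for all p ∈ M and all h ∈ G with h • q₀ = q₀. Then: (i) for every q ∈ N the value (A f)(q) := χ(g_q)⁻¹ · ∫_M κ(g_q⁻¹ • p) · f(p) dμ(p) (where f : M → ℝ is bounded and measurable) is independent of the choice of g_q ∈ G with g_q • q₀ = q, so A is well defined; and (ii) A is equivariant: (A (g • f))(q) = (A f)(g⁻¹ • q) for all g ∈ G, all bounded measurable f, and all q ∈ N, where (g • f)(p) = f(g⁻¹ • p). -/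
open MeasureTheory

/-- Equivariant linear operators from a compatible reduced kernel: with a `χ`-covariant
integral on `M`, a transitive action on `N` with reference point `q₀`, and an integrable
reduced kernel `κ` satisfying the compatibility condition on the stabilizer of `q₀`,
(i) the operator `(A f) q = χ(g_q)⁻¹ ∫ κ (g_q⁻¹ • p) * f p dμ` does not depend on the
choice of `g_q` with `g_q • q₀ = q`, and (ii) `A` is equivariant:
`(A (g • f)) q = (A f) (g⁻¹ • q)`. -/
theorem reduced_kernel_operator_wellDefined_and_equivariant
    {G M N : Type*} [Group G] [MulAction G M] [MulAction G N]
    [MeasurableSpace M] (μ : Measure M)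
    (hactmeas : ∀ g : G, Measurable fun p : M => g • p)
    (χ : G → ℝ) (hχpos : ∀ g, 0 < χ g)
    (hχhom : ∀ g₁ g₂ : G, χ (g₁ * g₂) = χ g₁ * χ g₂)
    (hcov : ∀ (g : G) (f : M → ℝ), Integrable f μ →
      ∫ p, f (g⁻¹ • p) ∂μ = χ g * ∫ p, f p ∂μ)
    (q₀ : N) (htrans : ∀ q : N, ∃ g : G, g • q₀ = q)
    (κ : M → ℝ) (hκint : Integrable κ μ)
    (hcompat : ∀ h : G, h • q₀ = q₀ → ∀ p : M, κ (h⁻¹ • p) = χ h * κ p) :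
    (∀ (q : N) (g₁ g₂ : G), g₁ • q₀ = q → g₂ • q₀ = q →
      ∀ f : M → ℝ, Measurable f → (∃ B, ∀ p, |f p| ≤ B) →
        (χ g₁)⁻¹ * ∫ p, κ (g₁⁻¹ • p) * f p ∂μ
          = (χ g₂)⁻¹ * ∫ p, κ (g₂⁻¹ • p) * f p ∂μ) ∧
    (∀ gq : N → G, (∀ q : N, gq q • q₀ = q) →
      ∀ (g : G) (f : M → ℝ), Measurable f → (∃ B, ∀ p, |f p| ≤ B) →
        ∀ q : N,
          (χ (gq q))⁻¹ * ∫ p, κ ((gq q)⁻¹ • p) * f (g⁻¹ • p) ∂μ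
            = (χ (gq (g⁻¹ • q)))⁻¹ * ∫ p, κ ((gq (g⁻¹ • q))⁻¹ • p) * f p ∂μ) := by
  have hχ0 : ∀ g : G, χ g ≠ 0 := fun g => (hχpos g).ne'
  -- the covariance identity holds for all functions, integrable or not
  have hcov' : ∀ (g : G) (F : M → ℝ), ∫ p, F (g⁻¹ • p) ∂μ = χ g * ∫ p, F p ∂μ := by
    intro g F
    by_cases hF : Integrable F μ
    · exact hcov g F hF
    · rw [integral_undef hF, mul_zero]
      by_cases hF' : Integrable (fun p => F (g⁻¹ • p)) μ
      · have h2 := hcov g⁻¹ _ hF'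
        simp only [inv_inv, inv_smul_smul] at h2
        rw [integral_undef hF] at h2
        exact ((mul_eq_zero.mp h2.symm).resolve_left (hχ0 g⁻¹))
      · exact integral_undef hF'
  have key : ∀ (q : N) (g₁ g₂ : G), g₁ • q₀ = q → g₂ • q₀ = q →
      ∀ f : M → ℝ,
        (χ g₁)⁻¹ * ∫ p, κ (g₁⁻¹ • p) * f p ∂μ
          = (χ g₂)⁻¹ * ∫ p, κ (g₂⁻¹ • p) * f p ∂μ := by
    intro q g₁ g₂ h₁ h₂ f
    have hstab : (g₂⁻¹ * g₁) • q₀ = q₀ := by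
      rw [mul_smul, h₁, ← h₂, inv_smul_smul]
    have hpt : ∀ p, κ (g₁⁻¹ • p) = χ (g₂⁻¹ * g₁) * κ (g₂⁻¹ • p) := by
      intro p
      have h3 := hcompat _ hstab (g₂⁻¹ • p)
      simpa [mul_inv_rev, mul_smul, smul_smul] using h3
    have hint : ∫ p, κ (g₁⁻¹ • p) * f p ∂μ
        = χ (g₂⁻¹ * g₁) * ∫ p, κ (g₂⁻¹ • p) * f p ∂μ := by
      rw [← integral_const_mul]
      congr 1
      ext p
      rw [hpt p]; ring
    rw [hint]
    have hmul : χ g₁ = χ g₂ * χ (g₂⁻¹ * g₁) := by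
      rw [← hχhom]; congr 1; group
    rw [hmul, mul_inv]
    field_simp [hχ0]
  constructor
  · intro q g₁ g₂ h₁ h₂ f _ _
    exact key q g₁ g₂ h₁ h₂ f
  · intro gq hgq g f hf hfbd q
    have h2 : (g * gq (g⁻¹ • q)) • q₀ = q := by
      rw [mul_smul, hgq, smul_inv_smul]
    have step1 := key q (gq q) (g * gq (g⁻¹ • q)) (hgq q) h2 (fun p => f (g⁻¹ • p))
    rw [step1]
    have step2 : ∫ p, κ ((g * gq (g⁻¹ • q))⁻¹ • p) * f (g⁻¹ • p) ∂μ
        = χ g * ∫ p, κ ((gq (g⁻¹ • q))⁻¹ • p) * f p ∂μ := by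
      have := hcov' g (fun p => κ ((gq (g⁻¹ • q))⁻¹ • p) * f p)
      simpa [mul_inv_rev, mul_smul] using this
    rw [step2, hχhom, mul_inv]
    field_simp [hχ0]
end

section
/- Let G be a group acting on sets M and N, and let k : M × N → EReal (the extended reals, carrying the max-plus/tropical structure). Define the tropical integral operator (T f)(q) = ⨆_{p ∈ M} (k(p,q) + f(p)) for f : M → EReal, and the induced actions (g • f)(p) = f(g⁻¹ • p) on functions on M and (g • F)(q) = F(g⁻¹ • q) on functions on N. Then T is equivariant — T(g • f) = g • (T f) for every g ∈ G and every f : M → EReal — if and only if the kernel satisfies the symmetry k(g • p, g • q) = k(p, q) for all g ∈ G, p ∈ M, q ∈ N. -/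
/-- A tropical (max-plus) integral operator `(T f) q = ⨆ p, (k p q + f p)` on
`EReal`-valued functions is equivariant with respect to the induced group actions
if and only if its kernel satisfies the symmetry `k (g • p) (g • q) = k p q`. -/
theorem tropical_operator_equivariant_iff_kernel_symm
    {G M N : Type*} [Group G] [MulAction G M] [MulAction G N]
    (k : M → N → EReal) :
    (∀ (g : G) (f : M → EReal) (q : N),
        (⨆ p : M, (k p q + f (g⁻¹ • p))) = ⨆ p : M, (k p (g⁻¹ • q) + f p)) ↔
      (∀ (g : G) (p : M) (q : N), k (g • p) (g • q) = k p q) := by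
  classical
  constructor
  · intro h g p q
    have key := h g (fun p' => if p' = p then (0 : EReal) else ⊥) (g • q)
    simp only [inv_smul_smul] at key
    have lhs : (⨆ p' : M, (k p' (g • q) + if g⁻¹ • p' = p then (0 : EReal) else ⊥))
        = k (g • p) (g • q) := by
      apply le_antisymm
      · refine iSup_le fun p' => ?_
        by_cases hp : g⁻¹ • p' = p
        · have hp' : p' = g • p := by rw [← hp, smul_inv_smul]
          simp [hp, hp']
        · simp [hp]
      · have := le_iSup (fun p' : M =>
          k p' (g • q) + if g⁻¹ • p' = p then (0 : EReal) else ⊥) (g • p)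
        simpa using this
    have rhs : (⨆ p' : M, (k p' q + if p' = p then (0 : EReal) else ⊥)) = k p q := by
      apply le_antisymm
      · refine iSup_le fun p' => ?_
        by_cases hp : p' = p
        · simp [hp]
        · simp [hp]
      · simpa using le_iSup (fun p' : M => k p' q + if p' = p then (0 : EReal) else ⊥) p
    rw [lhs, rhs] at key
    exact key
  · intro h g f q
    apply le_antisymm
    · refine iSup_le fun p => ?_
      refine le_iSup_of_le (g⁻¹ • p) ?_
      rw [h g⁻¹ p q]
    · refine iSup_le fun p => ?_
      refine le_iSup_of_le (g • p) ?_
      have hk : k (g • p) q = k p (g⁻¹ • q) := by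
        conv_lhs => rw [← smul_inv_smul g q]
        exact h g p (g⁻¹ • q)
      rw [inv_smul_smul, hk]
end
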